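/- arXiv:1705.08400 — 3 statements merged into one kernel-verified Lean document; each statement's English description precedes it below -/
import Mathlib

section
/- Let (Ω, μ) be a measure space, let E be a finite-dimensional real inner product space, let K be a linear subspace of L²(μ; E), let B₁, …, B_k be pairwise disjoint measurable subsets of Ω, and let ψ₁, …, ψ_k ∈ L²(μ; E) be such that ψ_j vanishes almost everywhere outside B_j. Suppose there is N > 0 such that for every j and every σ ∈ K one has ∫_{B_j} ‖ψ_j + σ‖²_E dμ ≥ N. Then for all real numbers β₁, …, β_k and every σ ∈ K, ‖Σ_{j=1}^k β_j ψ_j + σ‖²_{L²(μ;E)} ≥ N · Σ_{j=1}^k β_j². In particular, if in addition K is a subspace containing no nonzero element of the span of the ψ_j, the classes of ψ₁, …, ψ_k are linearly independent modulo K. -/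
/-!
On `B j` the combination `∑ i, β i • ψ i + σ` equals `β j • (ψ j + (β j)⁻¹ • σ)` almost everywhere,
so its squared norm integrated over `B j` is at least `N * β j ^ 2`. Summing over the disjoint
boxes bounds `N * ∑ j, β j ^ 2` by the squared `L²` norm. Taking `σ = -∑ j, c j • ψ j` for a
relation `∑ j, c j • [ψ j] = 0` in the quotient then forces `c = 0`.
-/

open MeasureTheory Function
open scoped ENNReal

namespace MeasureTheory

theorem Lp.coeFn_finset_sum {α E ι : Type*} [MeasurableSpace α] {μ : Measure α}
    [NormedAddCommGroup E] {p : ℝ≥0∞} (s : Finset ι) (f : ι → Lp E p μ) :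
    ⇑(∑ i ∈ s, f i) =ᵐ[μ] ∑ i ∈ s, ⇑(f i) := by
  classical
  induction s using Finset.induction_on with
  | empty => simpa using Lp.coeFn_zero E p μ
  | insert a s has ih =>
    rw [Finset.sum_insert has, Finset.sum_insert has]
    filter_upwards [Lp.coeFn_add (f a) (∑ i ∈ s, f i), ih] with x hadd hsum
    rw [hadd, Pi.add_apply, Pi.add_apply, hsum]

section L2

variable {Ω E : Type*} [MeasurableSpace Ω] {μ : Measure Ω}
  [NormedAddCommGroup E] [InnerProductSpace ℝ E]

theorem L2.integrable_sq_norm (f : Lp E 2 μ) : Integrable (fun x => ‖f x‖ ^ 2) μ := by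
  simpa only [real_inner_self_eq_norm_sq] using L2.integrable_inner (𝕜 := ℝ) f f

theorem L2.sq_norm_eq_integral_sq_norm (f : Lp E 2 μ) : ‖f‖ ^ 2 = ∫ x, ‖f x‖ ^ 2 ∂μ := by
  simp only [← real_inner_self_eq_norm_sq, L2.inner_def]

end L2

theorem sum_setIntegral_le_integral {Ω ι : Type*} [MeasurableSpace Ω] {μ : Measure Ω}
    (s : Finset ι) {B : ι → Set Ω} (hB : ∀ i, MeasurableSet (B i))
    (hdisj : Pairwise (Disjoint on B)) {f : Ω → ℝ} (hf : Integrable f μ) (hf₀ : 0 ≤ᵐ[μ] f) :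
    ∑ i ∈ s, ∫ x in B i, f x ∂μ ≤ ∫ x, f x ∂μ := by
  rw [← integral_biUnion_finset s (fun i _ => hB i) (hdisj.set_pairwise _)
    (fun i _ => hf.integrableOn)]
  exact setIntegral_le_integral hf hf₀

theorem ae_sum_smul_eq_of_disjoint_support {Ω ι R E : Type*} [MeasurableSpace Ω]
    {μ : Measure Ω} [Fintype ι] [AddCommMonoid E] [SMulZeroClass R E] {B : ι → Set Ω}
    (hdisj : Pairwise (Disjoint on B)) {ψ : ι → Ω → E}
    (hsupp : ∀ i, ∀ᵐ x ∂μ, x ∉ B i → ψ i x = 0) (β : ι → R) (j : ι) :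
    ∀ᵐ x ∂μ, x ∈ B j → ∑ i, β i • ψ i x = β j • ψ j x := by
  filter_upwards [ae_all_iff.2 hsupp] with x hzero hx
  refine Finset.sum_eq_single j (fun i _ hij => ?_) (by simp)
  rw [hzero i fun hxi => (hdisj hij).le_bot ⟨hxi, hx⟩, smul_zero]

theorem mul_sq_le_setIntegral_sq_norm_sum_smul_add {Ω E ι : Type*} [MeasurableSpace Ω]
    {μ : Measure Ω} [NormedAddCommGroup E] [NormedSpace ℝ E] [Fintype ι]
    (K : Submodule ℝ (Lp E 2 μ)) {B : ι → Set Ω} (hdisj : Pairwise (Disjoint on B))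
    {ψ : ι → Lp E 2 μ} (hsupp : ∀ i, ∀ᵐ x ∂μ, x ∉ B i → ψ i x = 0) {N : ℝ} {j : ι}
    (hB : MeasurableSet (B j)) (hlow : ∀ σ ∈ K, N ≤ ∫ x in B j, ‖(ψ j + σ) x‖ ^ 2 ∂μ)
    (β : ι → ℝ) {σ : Lp E 2 μ} (hσ : σ ∈ K) :
    N * β j ^ 2 ≤ ∫ x in B j, ‖(∑ i, β i • ψ i + σ) x‖ ^ 2 ∂μ := by
  by_cases hβ : β j = 0
  · rw [hβ, zero_pow two_ne_zero, mul_zero]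
    exact setIntegral_nonneg hB fun _ _ => by positivity
  set σ' := (β j)⁻¹ • σ
  have hlocal : ∀ᵐ x ∂μ, x ∈ B j → (∑ i, β i • ψ i + σ) x = β j • (ψ j + σ') x := by
    filter_upwards [Lp.coeFn_add (∑ i, β i • ψ i) σ, Lp.coeFn_finset_sum Finset.univ
      (fun i => β i • ψ i), ae_all_iff.2 fun i => Lp.coeFn_smul (β i) (ψ i),
      Lp.coeFn_add (ψ j) σ', Lp.coeFn_smul (β j)⁻¹ σ,
      ae_sum_smul_eq_of_disjoint_support hdisj hsupp β j]
      with x hadd hsum hsmul hadd' hsmul' hj hx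
    rw [hadd, Pi.add_apply, hsum, Finset.sum_apply]
    simp only [hsmul, Pi.smul_apply]
    rw [hj hx, hadd', Pi.add_apply, hsmul', Pi.smul_apply, smul_add, smul_smul,
      mul_inv_cancel₀ hβ, one_smul]
  calc N * β j ^ 2 ≤ β j ^ 2 * ∫ x in B j, ‖(ψ j + σ') x‖ ^ 2 ∂μ := by
        rw [mul_comm]
        exact mul_le_mul_of_nonneg_left (hlow σ' (K.smul_mem _ hσ)) (sq_nonneg _)
    _ = ∫ x in B j, ‖β j • (ψ j + σ') x‖ ^ 2 ∂μ := by
        simp only [norm_smul, mul_pow, Real.norm_eq_abs, sq_abs]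
        exact (integral_const_mul _ _).symm
    _ = ∫ x in B j, ‖(∑ i, β i • ψ i + σ) x‖ ^ 2 ∂μ :=
        (setIntegral_congr_ae hB (hlocal.mono fun x hx hxB => by rw [hx hxB])).symm

end MeasureTheory

theorem Submodule.linearIndependent_mk_of_sq_norm_le {F ι : Type*} [SeminormedAddCommGroup F]
    [Module ℝ F] [Fintype ι] (K : Submodule ℝ F) {v : ι → F} {N : ℝ} (hN : 0 < N)
    (hbound : ∀ β : ι → ℝ, ∀ σ ∈ K, N * ∑ i, β i ^ 2 ≤ ‖∑ i, β i • v i + σ‖ ^ 2) :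
    LinearIndependent ℝ fun i => (Submodule.Quotient.mk (v i) : F ⧸ K) := by
  rw [Fintype.linearIndependent_iff]
  intro c hc
  have hmem : ∑ i, c i • v i ∈ K := by
    rw [← Submodule.Quotient.mk_eq_zero, ← K.mkQ_apply, map_sum]
    simpa only [K.mkQ_apply, Submodule.Quotient.mk_smul] using hc
  have hsum : ∑ i, c i ^ 2 = 0 := by
    have h := hbound c _ (K.neg_mem hmem)
    rw [add_neg_cancel, norm_zero] at h
    nlinarith [Finset.sum_nonneg fun i (_ : i ∈ Finset.univ) => sq_nonneg (c i)]
  intro i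
  exact pow_eq_zero_iff two_ne_zero |>.mp <|
    (Finset.sum_eq_zero_iff_of_nonneg fun j _ => sq_nonneg (c j)).mp hsum i (Finset.mem_univ i)

theorem disjoint_support_quotient_lower_bound_general
    {Ω : Type*} [MeasurableSpace Ω] (μ : Measure Ω)
    {E : Type*} [NormedAddCommGroup E] [InnerProductSpace ℝ E]
    (K : Submodule ℝ (Lp E 2 μ)) {k : ℕ} (B : Fin k → Set Ω)
    (hBmeas : ∀ j, MeasurableSet (B j))
    (hBdisj : ∀ i j, i ≠ j → Disjoint (B i) (B j))
    (ψ : Fin k → Lp E 2 μ)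
    (hsupp : ∀ j, ∀ᵐ x ∂μ, x ∉ B j → ψ j x = 0)
    (N : ℝ) (hN : 0 < N)
    (hlow : ∀ j, ∀ σ ∈ K, N ≤ ∫ x in B j, ‖(ψ j + σ) x‖ ^ 2 ∂μ) :
    (∀ (β : Fin k → ℝ), ∀ σ ∈ K,
        N * ∑ j, (β j) ^ 2 ≤ ‖(∑ j, β j • ψ j) + σ‖ ^ 2) ∧
      ((∀ v ∈ Submodule.span ℝ (Set.range ψ), v ∈ K → v = 0) →
        LinearIndependent ℝ fun j => (Submodule.Quotient.mk (ψ j) : Lp E 2 μ ⧸ K)) := by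
  have hbound (β : Fin k → ℝ) (σ : Lp E 2 μ) (hσ : σ ∈ K) :
      N * ∑ j, β j ^ 2 ≤ ‖∑ j, β j • ψ j + σ‖ ^ 2 := by
    set f := ∑ j, β j • ψ j + σ
    calc N * ∑ j, β j ^ 2 = ∑ j, N * β j ^ 2 := Finset.mul_sum _ _ _
      _ ≤ ∑ j, ∫ x in B j, ‖f x‖ ^ 2 ∂μ := Finset.sum_le_sum fun j _ =>
          mul_sq_le_setIntegral_sq_norm_sum_smul_add K hBdisj hsupp (hBmeas j) (hlow j) β hσ
      _ ≤ ∫ x, ‖f x‖ ^ 2 ∂μ := sum_setIntegral_le_integral _ hBmeas hBdisj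
          (L2.integrable_sq_norm f) (ae_of_all _ fun _ => by positivity)
      _ = ‖f‖ ^ 2 := (L2.sq_norm_eq_integral_sq_norm f).symm
  exact ⟨hbound, fun _ => K.linearIndependent_mk_of_sq_norm_le hN hbound⟩

/-- Disjoint-support lower bound: if `ψ₁, …, ψ_k ∈ L²(μ; E)` are supported (a.e.) in
pairwise disjoint measurable sets `B_j`, and for every `j` and every `σ` in a subspace
`K ⊆ L²(μ; E)` one has `∫_{B_j} ‖ψ_j + σ‖² dμ ≥ N` with `N > 0`, then for all scalars `β_j`
and all `σ ∈ K`, `‖∑ β_j ψ_j + σ‖² ≥ N ∑ β_j²`.  In particular, if `K` contains no nonzero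
element of the span of the `ψ_j`, the classes of the `ψ_j` in `L²(μ;E)/K` are linearly
independent. -/
theorem disjoint_support_quotient_lower_bound
    {Ω : Type*} [MeasurableSpace Ω] (μ : Measure Ω)
    {E : Type*} [NormedAddCommGroup E] [InnerProductSpace ℝ E] [FiniteDimensional ℝ E]
    (K : Submodule ℝ (Lp E 2 μ)) {k : ℕ} (B : Fin k → Set Ω)
    (hBmeas : ∀ j, MeasurableSet (B j))
    (hBdisj : ∀ i j, i ≠ j → Disjoint (B i) (B j))
    (ψ : Fin k → Lp E 2 μ)
    (hsupp : ∀ j, ∀ᵐ x ∂μ, x ∉ B j → ψ j x = 0)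
    (N : ℝ) (hN : 0 < N)
    (hlow : ∀ j, ∀ σ ∈ K, N ≤ ∫ x in B j, ‖(ψ j + σ) x‖ ^ 2 ∂μ) :
    (∀ (β : Fin k → ℝ), ∀ σ ∈ K,
        N * ∑ j, (β j) ^ 2 ≤ ‖(∑ j, β j • ψ j) + σ‖ ^ 2) ∧
      ((∀ v ∈ Submodule.span ℝ (Set.range ψ), v ∈ K → v = 0) →
        LinearIndependent ℝ fun j => (Submodule.Quotient.mk (ψ j) : Lp E 2 μ ⧸ K)) :=
  disjoint_support_quotient_lower_bound_general μ K B hBmeas hBdisj ψ hsupp N hN hlow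
end

section
/- Let (Ω, μ) be a measure space, let E and F be finite-dimensional real inner product spaces, let D be a linear subspace of L²(μ; E), let d : D → L²(μ; F) be a linear map with kernel K, and let B₁, …, B_k be pairwise disjoint measurable subsets of Ω. Suppose ψ₁, …, ψ_k ∈ D are such that ψ_j and dψ_j vanish almost everywhere outside B_j, and there are constants E₀ ≥ 0 and N > 0 such that ‖dψ_j‖² ≤ E₀ for every j, and for every j and every σ ∈ K one has ∫_{B_j} ‖ψ_j + σ‖²_E dμ ≥ N. Then the classes of ψ₁, …, ψ_k in D/K are linearly independent, and λ_k(d) ≤ E₀/N. -/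
open MeasureTheory
open scoped ENNReal

/-- The `k`-th min-max value of a linear map `d` defined on a subspace `D` of an inner
product space `H`, with values in an inner product space `G`. -/
noncomputable def minMaxValue {H G : Type*} [NormedAddCommGroup H] [InnerProductSpace ℝ H]
    [NormedAddCommGroup G] [InnerProductSpace ℝ G] {D : Submodule ℝ H}
    (d : D →ₗ[ℝ] G) (k : ℕ) : ℝ≥0∞ :=
  ⨅ (V : Submodule ℝ D) (_ : FiniteDimensional ℝ V ∧ Module.finrank ℝ ↥V = k ∧
      ∀ ψ ∈ V, (ψ : H) ∈ closure (((LinearMap.ker d).map D.subtype : Submodule ℝ H) : Set H)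
        → ψ = 0),
    ⨆ (ψ : D) (_ : ψ ∈ V ∧ ψ ≠ 0),
      ENNReal.ofReal (‖d ψ‖ ^ 2 /
        (Metric.infDist (ψ : H)
          (((LinearMap.ker d).map D.subtype : Submodule ℝ H) : Set H)) ^ 2)

/-! The quotient norm of `φ = ∑ cⱼ ψⱼ` is at least `N ∑ cⱼ²`: for `σ ∈ Ker d`, on `Bⱼ` the form
`φ + σ` agrees with `cⱼ (ψⱼ + cⱼ⁻¹ σ)` and `cⱼ⁻¹ σ ∈ Ker d`, so its mass on `Bⱼ` is at least
`N cⱼ²`, and the `Bⱼ` are disjoint. The `dψⱼ` have disjoint supports, hence are orthogonal, so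
`‖dφ‖² ≤ E₀ ∑ cⱼ²`. Thus the span of the `ψⱼ` is a `k`-dimensional space meeting the closure of
`Ker d` only in `0`, on which the Rayleigh quotient is at most `E₀ / N`. -/

open scoped InnerProductSpace

section Orthogonal

variable {F : Type*} [NormedAddCommGroup F] [InnerProductSpace ℝ F] {ι : Type*} [Fintype ι]

theorem norm_sum_sq_eq_sum_norm_sq_of_pairwise_inner_eq_zero {v : ι → F}
    (hv : Pairwise fun i j => ⟪v i, v j⟫_ℝ = 0) : ‖∑ i, v i‖ ^ 2 = ∑ i, ‖v i‖ ^ 2 := by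
  classical
  rw [← real_inner_self_eq_norm_sq, sum_inner]
  refine Finset.sum_congr rfl fun i _ => ?_
  rw [inner_sum, Finset.sum_eq_single i (fun j _ hji => hv hji.symm) (by simp),
    real_inner_self_eq_norm_sq]

theorem norm_sum_smul_sq_le_of_pairwise_inner_eq_zero {v : ι → F}
    (hv : Pairwise fun i j => ⟪v i, v j⟫_ℝ = 0) {E₀ : ℝ} (hE₀ : ∀ i, ‖v i‖ ^ 2 ≤ E₀)
    (c : ι → ℝ) : ‖∑ i, c i • v i‖ ^ 2 ≤ E₀ * ∑ i, c i ^ 2 := by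
  have hcv : Pairwise fun i j => ⟪c i • v i, c j • v j⟫_ℝ = 0 := fun i j hij => by
    simp [real_inner_smul_left, real_inner_smul_right, hv hij]
  rw [norm_sum_sq_eq_sum_norm_sq_of_pairwise_inner_eq_zero hcv, Finset.mul_sum]
  refine Finset.sum_le_sum fun i _ => ?_
  rw [norm_smul, mul_pow, Real.norm_eq_abs, sq_abs, mul_comm E₀]
  exact mul_le_mul_of_nonneg_left (hE₀ i) (sq_nonneg _)

end Orthogonal

theorem sum_sq_pos_of_ne_zero {ι : Type*} [Fintype ι] {c : ι → ℝ} (hc : c ≠ 0) :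
    0 < ∑ i, c i ^ 2 := by
  obtain ⟨i, hi⟩ := Function.ne_iff.1 hc
  exact Finset.sum_pos' (fun j _ => sq_nonneg (c j))
    ⟨i, Finset.mem_univ i, pow_two_pos_of_ne_zero hi⟩

section MinMax

variable {H G : Type*} [NormedAddCommGroup H] [InnerProductSpace ℝ H]
  [NormedAddCommGroup G] [InnerProductSpace ℝ G] {D : Submodule ℝ H} (d : D →ₗ[ℝ] G)

abbrev ambientKer : Submodule ℝ H := (LinearMap.ker d).map D.subtype

theorem minMaxValue_le_of_le_mul_infDist_sq {k : ℕ} (V : Submodule ℝ D) [FiniteDimensional ℝ V]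
    (hVk : Module.finrank ℝ V = k)
    (hV : ∀ φ ∈ V, (φ : H) ∈ closure (ambientKer d : Set H) → φ = 0)
    {C : ℝ} (hC : ∀ φ ∈ V, ‖d φ‖ ^ 2 ≤ C * Metric.infDist (φ : H) (ambientKer d) ^ 2) :
    minMaxValue d k ≤ ENNReal.ofReal C := by
  refine iInf₂_le_of_le V ⟨‹_›, hVk, hV⟩ (iSup₂_le fun φ ⟨hφ, hne⟩ => ?_)
  have hdist : 0 < Metric.infDist (φ : H) (ambientKer d) :=
    Metric.infDist_nonneg.lt_of_ne' fun h => hne (hV φ hφ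
      ((Metric.mem_closure_iff_infDist_zero ⟨0, Submodule.zero_mem _⟩).2 h))
  exact ENNReal.ofReal_le_ofReal ((div_le_iff₀ (by positivity)).2 (hC φ hφ))

variable {ι : Type*} [Fintype ι] (ψ : ι → D) {N : ℝ}
  (hlow : ∀ c : ι → ℝ, ∀ σ ∈ ambientKer d,
    N * ∑ i, c i ^ 2 ≤ ‖((∑ i, c i • ψ i : D) : H) + σ‖ ^ 2)
include hlow

theorem mul_sum_sq_le_infDist_sq (c : ι → ℝ) :
    N * ∑ i, c i ^ 2 ≤ Metric.infDist ((∑ i, c i • ψ i : D) : H) (ambientKer d) ^ 2 := by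
  refine (Real.sqrt_le_iff.1 ((Metric.le_infDist ⟨0, Submodule.zero_mem _⟩).2 fun y hy => ?_)).2
  rw [dist_eq_norm, sub_eq_add_neg]
  exact Real.sqrt_le_iff.2 ⟨norm_nonneg _, hlow c (-y) (neg_mem hy)⟩

theorem eq_zero_of_sum_smul_mem_closure (hN : 0 < N)
    {c : ι → ℝ} (hc : ((∑ i, c i • ψ i : D) : H) ∈ closure (ambientKer d : Set H)) : c = 0 := by
  by_contra hne
  have hpos : 0 < N * ∑ i, c i ^ 2 := mul_pos hN (sum_sq_pos_of_ne_zero hne)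
  have hdist := mul_sum_sq_le_infDist_sq d ψ hlow c
  rw [Metric.infDist_zero_of_mem_closure hc] at hdist
  linarith

theorem linearIndependent_mkQ_of_mul_sum_sq_le (hN : 0 < N) :
    LinearIndependent ℝ fun i => (Submodule.Quotient.mk (ψ i) : D ⧸ LinearMap.ker d) := by
  refine Fintype.linearIndependent_iff.2 fun c hc => congrFun (eq_zero_of_sum_smul_mem_closure
    d ψ hlow hN (subset_closure (Submodule.mem_map_of_mem ?_)))
  refine (Submodule.Quotient.mk_eq_zero _).1 ?_
  rw [← Submodule.mkQ_apply, map_sum]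
  simpa using hc

theorem minMaxValue_le_of_mul_sum_sq_le {E₀ : ℝ} (hE₀ : 0 ≤ E₀) (hN : 0 < N)
    (henergy : ∀ c : ι → ℝ, ‖d (∑ i, c i • ψ i)‖ ^ 2 ≤ E₀ * ∑ i, c i ^ 2) :
    (LinearIndependent ℝ fun i => (Submodule.Quotient.mk (ψ i) : D ⧸ LinearMap.ker d)) ∧
      minMaxValue d (Fintype.card ι) ≤ ENNReal.ofReal (E₀ / N) := by
  have hind := linearIndependent_mkQ_of_mul_sum_sq_le d ψ hlow hN
  have : FiniteDimensional ℝ (Submodule.span ℝ (Set.range ψ)) :=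
    .span_of_finite ℝ (Set.finite_range ψ)
  refine ⟨hind, minMaxValue_le_of_le_mul_infDist_sq d (Submodule.span ℝ (Set.range ψ))
    (finrank_span_eq_card (hind.of_comp (LinearMap.ker d).mkQ)) ?_ ?_⟩
  · rintro φ hφ hcl
    obtain ⟨c, rfl⟩ := (Submodule.mem_span_range_iff_exists_fun ℝ).1 hφ
    simp [eq_zero_of_sum_smul_mem_closure d ψ hlow hN hcl]
  · intro φ hφ
    obtain ⟨c, rfl⟩ := (Submodule.mem_span_range_iff_exists_fun ℝ).1 hφ
    calc ‖d (∑ i, c i • ψ i)‖ ^ 2 ≤ E₀ * ∑ i, c i ^ 2 := henergy c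
      _ = E₀ / N * (N * ∑ i, c i ^ 2) := by field_simp
      _ ≤ E₀ / N * Metric.infDist ((∑ i, c i • ψ i : D) : H) (ambientKer d) ^ 2 :=
        mul_le_mul_of_nonneg_left (mul_sum_sq_le_infDist_sq d ψ hlow c) (by positivity)

end MinMax

section L2

open Function

variable {Ω E : Type*} [MeasurableSpace Ω] {μ : Measure Ω} [NormedAddCommGroup E]
  [InnerProductSpace ℝ E] {ι : Type*} [Fintype ι]

theorem MeasureTheory.L2.inner_eq_zero_of_disjoint {f g : Lp E 2 μ} {s t : Set Ω}
    (hst : Disjoint s t) (hf : ∀ᵐ x ∂μ, x ∉ s → f x = 0) (hg : ∀ᵐ x ∂μ, x ∉ t → g x = 0) :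
    ⟪f, g⟫_ℝ = 0 := by
  rw [L2.inner_def]
  refine integral_eq_zero_of_ae ?_
  filter_upwards [hf, hg] with x hfx hgx
  by_cases hx : x ∈ s
  · simp [hgx (Set.disjoint_left.1 hst hx)]
  · simp [hfx hx]

theorem MeasureTheory.L2.sum_setIntegral_norm_sq_le_norm_sq (f : Lp E 2 μ) {B : ι → Set Ω}
    (hB : ∀ i, MeasurableSet (B i)) (hdisj : Pairwise (Disjoint on B)) :
    ∑ i, ∫ x in B i, ‖f x‖ ^ 2 ∂μ ≤ ‖f‖ ^ 2 := by
  have hint : Integrable (fun x => ‖f x‖ ^ 2) μ := by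
    simpa only [real_inner_self_eq_norm_sq] using L2.integrable_inner (𝕜 := ℝ) f f
  rw [← integral_iUnion_fintype hB hdisj fun i => hint.integrableOn,
    ← real_inner_self_eq_norm_sq, L2.inner_def]
  simp only [real_inner_self_eq_norm_sq]
  exact setIntegral_le_integral hint (.of_forall fun x => sq_nonneg _)

variable {ψ : ι → Lp E 2 μ} {B : ι → Set Ω} (hdisj : Pairwise (Disjoint on B))
  (hsupp : ∀ i, ∀ᵐ x ∂μ, x ∉ B i → ψ i x = 0)
include hdisj hsupp

theorem sum_smul_ae_eq_smul_on (c : ι → ℝ) (j : ι) :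
    ∀ᵐ x ∂μ, x ∈ B j → (∑ i, c i • ψ i : Lp E 2 μ) x = c j • ψ j x := by
  classical
  filter_upwards [Lp.coeFn_fun_finsetSum Finset.univ fun i => c i • ψ i,
    ae_all_iff.2 fun i => Lp.coeFn_smul (c i) (ψ i), ae_all_iff.2 hsupp]
    with x hsum hsmul hvanish hx
  rw [hsum, Finset.sum_eq_single j _ (by simp), hsmul, Pi.smul_apply]
  intro i _ hij
  rw [hsmul, Pi.smul_apply, hvanish i (Set.disjoint_right.1 (hdisj hij) hx), smul_zero]

variable {S : Submodule ℝ (Lp E 2 μ)} {N : ℝ}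

theorem mul_sq_le_setIntegral_norm_sq_sum_smul_add {j : ι} (hBj : MeasurableSet (B j))
    (hlow : ∀ σ ∈ S, N ≤ ∫ x in B j, ‖(ψ j + σ) x‖ ^ 2 ∂μ) (c : ι → ℝ) {σ : Lp E 2 μ}
    (hσ : σ ∈ S) : N * c j ^ 2 ≤ ∫ x in B j, ‖(∑ i, c i • ψ i + σ) x‖ ^ 2 ∂μ := by
  by_cases hc : c j = 0
  · simpa [hc] using setIntegral_nonneg hBj fun x _ => sq_nonneg ‖(∑ i, c i • ψ i + σ) x‖
  have hloc : ∀ᵐ x ∂μ, x ∈ B j →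
      ‖(∑ i, c i • ψ i + σ) x‖ ^ 2 = c j ^ 2 * ‖(ψ j + (c j)⁻¹ • σ) x‖ ^ 2 := by
    filter_upwards [sum_smul_ae_eq_smul_on hdisj hsupp c j, Lp.coeFn_add (∑ i, c i • ψ i) σ,
      Lp.coeFn_add (ψ j) ((c j)⁻¹ • σ), Lp.coeFn_smul (c j)⁻¹ σ] with x hsum hadd hadd' hsmul hx
    have hfactor : c j • ψ j x + σ x = c j • (ψ j x + (c j)⁻¹ • σ x) := by
      rw [smul_add, smul_inv_smul₀ hc]
    rw [hadd, hadd', Pi.add_apply, Pi.add_apply, hsum hx, hsmul, Pi.smul_apply, hfactor,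
      norm_smul, mul_pow, Real.norm_eq_abs, sq_abs]
  rw [setIntegral_congr_ae hBj hloc, integral_const_mul, mul_comm N]
  exact mul_le_mul_of_nonneg_left (hlow _ (S.smul_mem _ hσ)) (sq_nonneg _)

theorem mul_sum_sq_le_norm_sq_sum_smul_add (hB : ∀ i, MeasurableSet (B i))
    (hlow : ∀ j, ∀ σ ∈ S, N ≤ ∫ x in B j, ‖(ψ j + σ) x‖ ^ 2 ∂μ) (c : ι → ℝ) {σ : Lp E 2 μ}
    (hσ : σ ∈ S) : N * ∑ i, c i ^ 2 ≤ ‖∑ i, c i • ψ i + σ‖ ^ 2 :=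
  calc N * ∑ i, c i ^ 2 = ∑ j, N * c j ^ 2 := Finset.mul_sum _ _ _
    _ ≤ ∑ j, ∫ x in B j, ‖(∑ i, c i • ψ i + σ) x‖ ^ 2 ∂μ := Finset.sum_le_sum fun j _ =>
      mul_sq_le_setIntegral_norm_sq_sum_smul_add hdisj hsupp (hB j) (hlow j) c hσ
    _ ≤ ‖∑ i, c i • ψ i + σ‖ ^ 2 := L2.sum_setIntegral_norm_sq_le_norm_sq _ hB hdisj

end L2

theorem minMaxValue_le_of_disjoint_test_forms_general
    {Ω : Type*} [MeasurableSpace Ω] (μ : Measure Ω)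
    {E F : Type*} [NormedAddCommGroup E] [InnerProductSpace ℝ E]
    [NormedAddCommGroup F] [InnerProductSpace ℝ F]
    {D : Submodule ℝ (Lp E 2 μ)} (d : D →ₗ[ℝ] Lp F 2 μ)
    {k : ℕ} (B : Fin k → Set Ω)
    (hBmeas : ∀ j, MeasurableSet (B j))
    (hBdisj : ∀ i j, i ≠ j → Disjoint (B i) (B j))
    (ψ : Fin k → D)
    (hsupp : ∀ j, ∀ᵐ x ∂μ, x ∉ B j → (ψ j : Lp E 2 μ) x = 0)
    (hdsupp : ∀ j, ∀ᵐ x ∂μ, x ∉ B j → d (ψ j) x = 0)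
    (E₀ N : ℝ) (hE₀ : 0 ≤ E₀) (hN : 0 < N)
    (henergy : ∀ j, ‖d (ψ j)‖ ^ 2 ≤ E₀)
    (hlow : ∀ j, ∀ σ ∈ LinearMap.ker d,
      N ≤ ∫ x in B j, ‖((ψ j + σ : D) : Lp E 2 μ) x‖ ^ 2 ∂μ) :
    (LinearIndependent ℝ fun j =>
        (Submodule.Quotient.mk (ψ j) : D ⧸ LinearMap.ker d)) ∧
      minMaxValue d k ≤ ENNReal.ofReal (E₀ / N) := by
  have hlow' : ∀ j, ∀ σ ∈ ambientKer d,
      N ≤ ∫ x in B j, ‖((ψ j : Lp E 2 μ) + σ) x‖ ^ 2 ∂μ := by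
    rintro j _ ⟨σ, hσ, rfl⟩
    exact hlow j σ hσ
  have horth : Pairwise fun i j => ⟪d (ψ i), d (ψ j)⟫_ℝ = 0 := fun i j hij =>
    L2.inner_eq_zero_of_disjoint (hBdisj i j hij) (hdsupp i) (hdsupp j)
  have h := minMaxValue_le_of_mul_sum_sq_le d ψ
    (fun c σ hσ => by
      simpa using mul_sum_sq_le_norm_sq_sum_smul_add hBdisj hsupp hBmeas hlow' c hσ) hE₀ hN
    (fun c => by simpa using norm_sum_smul_sq_le_of_pairwise_inner_eq_zero horth henergy c)
  rwa [Fintype.card_fin] at h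

/-- Test forms `ψ₁, …, ψ_k` in the domain `D ⊆ L²(μ; E)` of `d : D → L²(μ; F)`, supported
with their differentials in pairwise disjoint measurable sets `B_j`, with energies
`‖dψ_j‖² ≤ E₀` and quotient norms bounded below by `∫_{B_j} ‖ψ_j + σ‖² dμ ≥ N > 0` for all
`σ ∈ Ker d`, give linearly independent classes modulo `Ker d` and the eigenvalue bound
`λ_k(d) ≤ E₀ / N`. -/
theorem minMaxValue_le_of_disjoint_test_forms
    {Ω : Type*} [MeasurableSpace Ω] (μ : Measure Ω)
    {E F : Type*} [NormedAddCommGroup E] [InnerProductSpace ℝ E] [FiniteDimensional ℝ E]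
    [NormedAddCommGroup F] [InnerProductSpace ℝ F] [FiniteDimensional ℝ F]
    {D : Submodule ℝ (Lp E 2 μ)} (d : D →ₗ[ℝ] Lp F 2 μ)
    {k : ℕ} (B : Fin k → Set Ω)
    (hBmeas : ∀ j, MeasurableSet (B j))
    (hBdisj : ∀ i j, i ≠ j → Disjoint (B i) (B j))
    (ψ : Fin k → D)
    (hsupp : ∀ j, ∀ᵐ x ∂μ, x ∉ B j → (ψ j : Lp E 2 μ) x = 0)
    (hdsupp : ∀ j, ∀ᵐ x ∂μ, x ∉ B j → d (ψ j) x = 0)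
    (E₀ N : ℝ) (hE₀ : 0 ≤ E₀) (hN : 0 < N)
    (henergy : ∀ j, ‖d (ψ j)‖ ^ 2 ≤ E₀)
    (hlow : ∀ j, ∀ σ ∈ LinearMap.ker d,
      N ≤ ∫ x in B j, ‖((ψ j + σ : D) : Lp E 2 μ) x‖ ^ 2 ∂μ) :
    (LinearIndependent ℝ fun j =>
        (Submodule.Quotient.mk (ψ j) : D ⧸ LinearMap.ker d)) ∧
      minMaxValue d k ≤ ENNReal.ofReal (E₀ / N) :=
  minMaxValue_le_of_disjoint_test_forms_general μ d B hBmeas hBdisj ψ hsupp hdsupp E₀ N hE₀ hN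
    henergy hlow
end

section
/- Let n ≥ 1 and let v : ℝⁿ → ℝⁿ be a Lipschitz map with compact support. Then ∫_{ℝⁿ} div v(x) dx = 0, where div v(x) = Σ_{i=1}^n ⟨Dv(x) e_i, e_i⟩ is the trace of the (almost everywhere defined, by Rademacher's theorem) total derivative Dv(x), and {e_i} is the standard orthonormal basis of ℝⁿ. -/
/-!
By Rademacher's theorem a Lipschitz map is differentiable almost everywhere, so each component of
`∫ Dv(x) w dx` is the integral of a line derivative of a compactly supported Lipschitz function.
Integrating by parts against the constant function `1`, which is Morrey's formula
`∫ ∂_w f · g = ∫ ∂_{-w} g · f`, shows that such an integral vanishes. Hence `∫ Dv(x) eᵢ dx = 0`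
for every `i`, and the divergence, a sum of components of these vectors, integrates to zero.
-/

open MeasureTheory

open scoped NNReal

variable {E F : Type*} [NormedAddCommGroup E] [NormedSpace ℝ E] [MeasurableSpace E] [BorelSpace E]
  [NormedAddCommGroup F] [NormedSpace ℝ F] {μ : Measure E} {C : ℝ≥0}

namespace LipschitzWith

theorem integrable_fderiv_apply [IsLocallyFiniteMeasure μ] [CompleteSpace F]
    [SecondCountableTopology F] {f : E → F} (hf : LipschitzWith C f) (h'f : HasCompactSupport f)
    (w : E) : Integrable (fun x ↦ fderiv ℝ f x w) μ := by
  borelize F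
  have h_supp : HasCompactSupport fun x ↦ fderiv ℝ f x w :=
    (h'f.fderiv ℝ).comp_left (g := fun L : E →L[ℝ] F ↦ L w) rfl
  have h_bdd : MemLp (fun x ↦ fderiv ℝ f x w) ⊤ μ :=
    memLp_top_of_bound (measurable_fderiv_apply_const ℝ f w).aestronglyMeasurable (C * ‖w‖)
      (.of_forall fun x ↦ ((fderiv ℝ f x).le_opNorm w).trans
        (by gcongr; exact norm_fderiv_le_of_lipschitz ℝ hf))
  exact (h_bdd.locallyIntegrable le_top).integrableOn_isCompact h_supp.isCompact
    |>.integrable_of_forall_notMem_eq_zero fun _ ↦ image_eq_zero_of_notMem_tsupport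

variable [FiniteDimensional ℝ E] [μ.IsAddHaarMeasure]

theorem integral_lineDeriv_eq_zero {f : E → ℝ} (hf : LipschitzWith C f)
    (h'f : HasCompactSupport f) (w : E) : ∫ x, lineDeriv ℝ f x w ∂μ = 0 := by
  simpa [lineDeriv] using
    ((LipschitzWith.const (1 : ℝ)).integral_lineDeriv_mul_eq (μ := μ) hf h'f (-w)).symm

theorem integral_fderiv_apply_eq_zero [FiniteDimensional ℝ F] {f : E → F}
    (hf : LipschitzWith C f) (h'f : HasCompactSupport f) (w : E) :
    ∫ x, fderiv ℝ f x w ∂μ = 0 := by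
  refine SeparatingDual.eq_zero_of_forall_dual_eq_zero (R := ℝ) fun φ ↦ ?_
  rw [← φ.integral_comp_comm (hf.integrable_fderiv_apply h'f w)]
  calc ∫ x, φ (fderiv ℝ f x w) ∂μ = ∫ x, lineDeriv ℝ (φ ∘ f) x w ∂μ := by
        refine integral_congr_ae ?_
        filter_upwards [hf.ae_differentiableAt] with x hx
        rw [(φ.differentiableAt.comp x hx).lineDeriv_eq_fderiv,
          fderiv_comp x φ.differentiableAt hx]
        simp
    _ = 0 := (φ.lipschitz.comp hf).integral_lineDeriv_eq_zero (h'f.comp_left φ.map_zero) w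

end LipschitzWith

theorem integral_div_eq_zero_of_lipschitz_compact_support_general
    (n : ℕ)
    (v : EuclideanSpace ℝ (Fin n) → EuclideanSpace ℝ (Fin n))
    (hv : ∃ L, LipschitzWith L v) (hsupp : HasCompactSupport v) :
    ∫ x, (∑ i, (inner ℝ (fderiv ℝ v x (EuclideanSpace.single i (1:ℝ)))
        (EuclideanSpace.single i (1:ℝ)) : ℝ)) = 0 := by
  obtain ⟨L, hL⟩ := hv
  have h_int i : Integrable (fun x ↦ fderiv ℝ v x (EuclideanSpace.single i (1 : ℝ))) :=
    hL.integrable_fderiv_apply hsupp _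
  rw [integral_finsetSum _ fun i _ ↦ (h_int i).inner_const _]
  refine Finset.sum_eq_zero fun i _ ↦ ?_
  simp only [real_inner_comm (EuclideanSpace.single i (1 : ℝ))]
  rw [integral_inner (h_int i), hL.integral_fderiv_apply_eq_zero hsupp, inner_zero_right]

/-- For a compactly supported Lipschitz vector field `v : ℝⁿ → ℝⁿ` (`n ≥ 1`), the integral
of its divergence `div v(x) = ∑ᵢ ⟨Dv(x) eᵢ, eᵢ⟩` vanishes, where `Dv` is the (almost
everywhere defined, by Rademacher's theorem) total derivative. -/
theorem integral_div_eq_zero_of_lipschitz_compact_support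
    (n : ℕ) (hn : 1 ≤ n)
    (v : EuclideanSpace ℝ (Fin n) → EuclideanSpace ℝ (Fin n))
    (hv : ∃ L, LipschitzWith L v) (hsupp : HasCompactSupport v) :
    ∫ x, (∑ i, (inner ℝ (fderiv ℝ v x (EuclideanSpace.single i (1:ℝ)))
        (EuclideanSpace.single i (1:ℝ)) : ℝ)) = 0 :=
  integral_div_eq_zero_of_lipschitz_compact_support_general n v hv hsupp
end
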